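/- arXiv:1908.02968 — 2 statements merged into one kernel-verified Lean document; each statement's English description precedes it below -/
import Mathlib

section
/- Let R be a commutative ring and G an abelian group (not necessarily torsion), and let RG be the group ring. If the Jacobson radical of R is zero and there exists a prime number p such that the characteristic of R is p and G contains an element of order p, then the Jacobson radical of RG equals Φ(N) for some nontrivial subgroup N of G. -/
/-- `Phi R N` is the ideal of the group ring `MonoidAlgebra R G` generated by the
elements `n - 1` with `n ∈ N`, i.e. the extension of the augmentation ideal of `RN`. -/
noncomputable def Phi (R : Type*) {G : Type*} [CommRing R] [CommGroup G] (N : Subgroup G) :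
    Ideal (MonoidAlgebra R G) :=
  Ideal.span ((fun n => MonoidAlgebra.of R G n - 1) '' (N : Set G))

/-!
Take `N` the `p`-primary component of `G`, which contains `g`. In characteristic `p` each `n - 1`
with `n ∈ N` is nilpotent, so `Φ(N) ⊆ J(RG)`. Conversely `Φ(N)` contains the kernel of the
surjection `RG → R[G/N]`, which maps `J(RG)` into `J(R[G/N])`; so it suffices that `J(R[H]) = 0`
when `H` has no element of order `p`. A coefficient of an element of `J(R[H])` vanishes in every
residue field `K = R/m`, because `J(K[H]) = 0`: the element lies in `K[H₀]` for a finitely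
generated `H₀ ≤ H`, restriction of coefficients is a `K[H₀]`-linear retraction of `K[H]`, so it
lies in `J(K[H₀])`; this is a Jacobson ring, so `J` is the nilradical, which vanishes since
`(∑ aₕ h)^p = ∑ aₕ^p h^p` and `h ↦ h^p` is injective.
-/

open Function MonoidAlgebra

namespace Ideal

variable {A B : Type*} [CommRing A] [CommRing B]

theorem jacobson_bot_le_comap_of_surjective (f : A →+* B) (hf : Surjective f) :
    (⊥ : Ideal A).jacobson ≤ (⊥ : Ideal B).jacobson.comap f := by
  intro x hx
  rw [mem_comap, mem_jacobson_bot] at *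
  intro y
  obtain ⟨a, rfl⟩ := hf y
  simpa using (hx a).map f

theorem mem_jacobson_bot_of_retraction (ι : A →+* B) (π : B → A)
    (hπ : ∀ x c, π (x * ι c) = π x * c) (hπ₁ : π 1 = 1) {a : A}
    (ha : ι a ∈ (⊥ : Ideal B).jacobson) : a ∈ (⊥ : Ideal A).jacobson := by
  rw [mem_jacobson_bot] at *
  intro c
  obtain ⟨u, hu⟩ := ha (ι c)
  have hinv : π ↑u⁻¹ * (a * c + 1) = 1 := by
    rw [← hπ, map_add, map_mul, map_one, ← hu, Units.inv_mul, hπ₁]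
  exact IsUnit.of_mul_eq_one_right _ hinv

end Ideal

namespace MonoidAlgebra

instance charP {R M : Type*} [CommRing R] [Monoid M] (p : ℕ) [CharP R p] : CharP R[M] p :=
  charP_of_injective_algebraMap' R p

section Frobenius

variable {K H : Type*} [CommRing K] [CommMonoid H] {p : ℕ} [Fact p.Prime] [CharP K p]

theorem pow_char_eq_mapDomain_map (x : K[H]) :
    x ^ p = mapDomain (· ^ p) (map (frobenius K p : K →+ K) x) := by
  induction x using MonoidAlgebra.induction_linear with
  | zero => simp [zero_pow (Fact.out : p.Prime).ne_zero]
  | add x y hx hy => rw [add_pow_char, hx, hy, MonoidAlgebra.map_add, mapDomain_add]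
  | single h r => simp [single_pow, map_single, mapDomain_single, frobenius_def]

theorem coeff_pow_char_pow (hH : Injective fun h : H => h ^ p) (x : K[H]) (h : H) :
    (x ^ p).coeff (h ^ p) = x.coeff h ^ p := by
  simp [pow_char_eq_mapDomain_map, mapDomain, Finsupp.mapDomain_apply hH, frobenius_def]

theorem isReduced_of_injective_pow [IsReduced K] (hH : Injective fun h : H => h ^ p) :
    IsReduced K[H] := by
  refine (isReduced_iff_pow_one_lt p (Fact.out : p.Prime).one_lt).mpr fun x hx => ?_
  ext h
  have hcoeff := coeff_pow_char_pow hH x h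
  rw [hx] at hcoeff
  simpa using (pow_eq_zero_iff (Fact.out : p.Prime).ne_zero).mp hcoeff.symm

end Frobenius

section Subgroup

variable {K H₀ H : Type*} [CommRing K] [Group H₀] [Group H] (f : H₀ →* H) (hf : Injective f)

theorem comapDomain_mul_mapDomain (x : K[H]) (c : K[H₀]) :
    comapDomain f hf (x * mapDomain f c) = comapDomain f hf x * c := by
  induction c using MonoidAlgebra.induction_linear with
  | zero => simp [mapDomain_zero]
  | add c d hc hd => rw [mapDomain_add, mul_add, comapDomain_add, hc, hd, mul_add]
  | single h r =>
    ext h'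
    simp [mapDomain_single, coeff_mul_single_apply]

theorem comapDomain_one : comapDomain f hf (1 : K[H]) = 1 := by
  simpa [← one_def] using comapDomain_single_map (R := K) f hf 1 1

end Subgroup

section Jacobson

variable {K H : Type*} [CommRing K] [CommGroup H] {p : ℕ} [Fact p.Prime] [CharP K p]
  [IsReduced K] [IsJacobsonRing K]

theorem jacobson_bot_eq_bot_of_fg [Group.FG H] (hH : Injective fun h : H => h ^ p) :
    (⊥ : Ideal K[H]).jacobson = ⊥ := by
  have : Monoid.FG H := Group.fg_iff_monoid_fg.mp ‹_›
  have : IsJacobsonRing K[H] := isJacobsonRing_of_finiteType (A := K)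
  have : IsReduced K[H] := isReduced_of_injective_pow hH
  exact (Ideal.radical_eq_jacobson ⊥).symm.trans (nilradical_eq_zero K[H])

theorem jacobson_bot_eq_bot_of_isJacobsonRing (hH : Injective fun h : H => h ^ p) :
    (⊥ : Ideal K[H]).jacobson = ⊥ := by
  refine eq_bot_iff.mpr fun β hβ => ?_
  set H₀ := Subgroup.closure (β.coeff.support : Set H)
  set ι := H₀.subtype
  have hβ₀ : mapDomain ι (comapDomain ι H₀.subtype_injective β) = β :=
    mapDomain_comapDomain (fun h hh => ⟨⟨h, Subgroup.subset_closure hh⟩, rfl⟩) _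
  have hH₀ : Injective fun h : H₀ => h ^ p := fun a b hab =>
    Subtype.ext (hH (by simpa using congrArg Subtype.val hab))
  have hmem := Ideal.mem_jacobson_bot_of_retraction (mapDomainRingHom K ι) _
    (comapDomain_mul_mapDomain ι H₀.subtype_injective) (comapDomain_one ι H₀.subtype_injective)
    (a := comapDomain ι H₀.subtype_injective β) (by rwa [mapDomainRingHom_apply, hβ₀])
  rw [jacobson_bot_eq_bot_of_fg hH₀, Ideal.mem_bot] at hmem
  rw [Ideal.mem_bot, ← hβ₀, hmem, mapDomain_zero]

theorem jacobson_bot_eq_bot {R : Type*} [CommRing R] [CharP R p]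
    (hR : (⊥ : Ideal R).jacobson = ⊥) (hH : Injective fun h : H => h ^ p) :
    (⊥ : Ideal R[H]).jacobson = ⊥ := by
  refine eq_bot_iff.mpr fun β hβ => ?_
  rw [Ideal.mem_bot]
  ext h
  rw [coeff_zero, Finsupp.zero_apply, ← Ideal.mem_bot, ← hR, Ideal.jacobson, Ideal.mem_sInf]
  rintro m ⟨-, hm⟩
  let := Ideal.Quotient.field m
  have : CharP (R ⧸ m) p := (CharP.charP_iff_prime_eq_zero Fact.out).mpr (by
    rw [← map_natCast (Ideal.Quotient.mk m), CharP.cast_eq_zero, map_zero])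
  have hβm := Ideal.jacobson_bot_le_comap_of_surjective (mapRingHom H (Ideal.Quotient.mk m))
    (map_surjective _ Ideal.Quotient.mk_surjective) hβ
  rw [Ideal.mem_comap, jacobson_bot_eq_bot_of_isJacobsonRing hH, Ideal.mem_bot] at hβm
  rw [← Ideal.Quotient.eq_zero_iff_mem, ← coeff_mapRingHom, hβm, coeff_zero, Finsupp.zero_apply]

end Jacobson

theorem mapDomainRingHom_surjective {R M N : Type*} [CommRing R] [Monoid M] [Monoid N]
    (f : M →* N) (hf : Surjective f) : Surjective (mapDomainRingHom R f) := by
  intro y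
  obtain ⟨x, hx⟩ := Finsupp.mapDomain_surjective hf y.coeff
  exact ⟨ofCoeff x, by ext; simp [mapDomain, hx]⟩

end MonoidAlgebra

theorem ker_mapDomainRingHom_mk'_le_Phi {R G : Type*} [CommRing R] [CommGroup G]
    (N : Subgroup G) : RingHom.ker (mapDomainRingHom R (QuotientGroup.mk' N)) ≤ Phi R N := by
  let π := Ideal.Quotient.mkₐ R (Phi R N)
  have hN : N ≤ (π.toMonoidHom.comp (of R G)).ker := fun n hn => by
    change Ideal.Quotient.mk _ (of R G n) = 1
    rw [← map_one (Ideal.Quotient.mk (Phi R N)), Ideal.Quotient.eq]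
    exact Ideal.subset_span ⟨n, hn, rfl⟩
  let ψ := lift R _ (G ⧸ N) (QuotientGroup.lift N _ hN)
  have hψ : ψ.comp (mapDomainAlgHom R R (QuotientGroup.mk' N)) = Ideal.Quotient.mkₐ R (Phi R N) :=
    algHom_ext (fun g => by simp [ψ, π, mapDomain_single]) (Subsingleton.elim _ _)
  intro x hx
  rw [← Ideal.Quotient.eq_zero_iff_mem, ← Ideal.Quotient.mkₐ_eq_mk R, ← hψ]
  simpa using congrArg ψ hx

theorem Phi_le_jacobson_bot_of_isPGroup {R G : Type*} [CommRing R] [CommGroup G] {p : ℕ}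
    [Fact p.Prime] [CharP R p] {N : Subgroup G} (hN : IsPGroup p N) :
    Phi R N ≤ (⊥ : Ideal R[G]).jacobson := by
  refine (Ideal.span_le.mpr ?_).trans Ideal.radical_le_jacobson
  rintro _ ⟨n, hn, rfl⟩
  obtain ⟨k, hk⟩ := hN ⟨n, hn⟩
  refine mem_nilradical.mpr ⟨p ^ k, ?_⟩
  have hk' : n ^ p ^ k = 1 := congrArg Subtype.val hk
  rw [sub_pow_char_pow, ← map_pow, hk', map_one, one_pow, sub_self]

theorem CommGroup.pow_injective_quotient_primaryComponent {G : Type*} [CommGroup G] (p : ℕ) :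
    Injective fun x : G ⧸ CommGroup.primaryComponent G p => x ^ p := by
  let Q := G ⧸ CommGroup.primaryComponent G p
  refine (injective_iff_map_eq_one (powMonoidHom p : Q →* Q)).mpr fun x hx => ?_
  induction x using QuotientGroup.induction_on with | H g => ?_
  obtain ⟨k, hk⟩ := CommGroup.mem_primaryComponent.mp ((QuotientGroup.eq_one_iff _).mp hx)
  exact (QuotientGroup.eq_one_iff g).mpr ⟨k + 1, by rwa [pow_succ', pow_mul]⟩

theorem stmt4 (R G : Type*) [CommRing R] [CommGroup G]
    (hJ : (⊥ : Ideal R).jacobson = ⊥)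
    (p : ℕ) (hp : p.Prime) (hchar : CharP R p) (g : G) (hg : orderOf g = p) :
    ∃ N : Subgroup G, N ≠ ⊥ ∧ (⊥ : Ideal (MonoidAlgebra R G)).jacobson = Phi R N := by
  have : Fact p.Prime := ⟨hp⟩
  set N := CommGroup.primaryComponent G p
  have hgN : g ∈ N := ⟨1, by rw [pow_one, ← hg, pow_orderOf_eq_one]⟩
  have hg₁ : g ≠ 1 := fun h => hp.one_lt.ne' (by rw [← hg, h, orderOf_one])
  set f := mapDomainRingHom R (QuotientGroup.mk' N)
  refine ⟨N, fun hN => hg₁ (Subgroup.mem_bot.mp (hN ▸ hgN)), le_antisymm ?_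
    (Phi_le_jacobson_bot_of_isPGroup (CommGroup.primaryComponent.isPGroup))⟩
  calc (⊥ : Ideal R[G]).jacobson ≤ (⊥ : Ideal R[G ⧸ N]).jacobson.comap f :=
        Ideal.jacobson_bot_le_comap_of_surjective f
          (mapDomainRingHom_surjective _ (QuotientGroup.mk'_surjective N))
    _ = RingHom.ker f := by
        rw [jacobson_bot_eq_bot hJ (CommGroup.pow_injective_quotient_primaryComponent p)]
        rfl
    _ ≤ Phi R N := ker_mapDomainRingHom_mk'_le_Phi N
end

section
/- Let R be a field of characteristic 2 and let G be an abelian 2-group which has no element of order 4 and whose cardinality is greater than 2. Then there exist elements f₁, f₂ ∈ G \ {1} with f₁f₂ ∉ {1, f₁, f₂}, and for the element x = 1 + f₁ + f₂ + f₁f₂ of the group ring RG, the principal ideal xRG is a proper ideal of RG that does not belong to Φ(𝔖). -/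
lemma Cardinal.exists_ne_ne_of_two_lt_mk {α : Type*} (h : 2 < Cardinal.mk α) (a b : α) :
    ∃ c, c ≠ a ∧ c ≠ b := by
  by_contra! hab
  have hsub : Set.univ ⊆ ({a, b} : Set α) := fun c _ => by
    by_cases hc : c = a
    · exact .inl hc
    · exact .inr (hab c hc)
  refine h.not_ge ?_
  calc Cardinal.mk α = Cardinal.mk (Set.univ : Set α) := Cardinal.mk_univ.symm
    _ ≤ Cardinal.mk ({a, b} : Set α) := Cardinal.mk_le_mk_of_subset hsub
    _ ≤ 2 := Cardinal.mk_insert_le.trans (by norm_num)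

section Exponent2

variable {G : Type*} [Group G]

lemma IsPGroup.pow_two_eq_one (hG : IsPGroup 2 G) (h4 : ∀ g : G, orderOf g ≠ 4) (g : G) :
    g ^ 2 = 1 := by
  obtain ⟨k, hk⟩ := IsPGroup.iff_orderOf.mp hG g
  have hk1 : k ≤ 1 := by
    by_contra! hk2
    have h4dvd : 4 ∣ orderOf g := hk ▸ (Nat.pow_dvd_pow 2 hk2 : 2 ^ 2 ∣ 2 ^ k)
    exact h4 _ (orderOf_pow_orderOf_div (by simp [hk]) h4dvd)
  exact orderOf_dvd_iff_pow_eq_one.mp (hk ▸ Nat.pow_dvd_pow 2 hk1)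

lemma eq_one_or_eq_of_mem_zpowers {a n : G} (ha : a ^ 2 = 1) (hn : n ∈ Subgroup.zpowers a) :
    n = 1 ∨ n = a := by
  obtain ⟨z, rfl⟩ := hn
  rcases Int.even_or_odd' z with ⟨m, rfl | rfl⟩
  · left; simp [zpow_mul, ha]
  · right; simp [zpow_add, zpow_mul, ha]

lemma mul_ne_one_of_pow_two_eq_one {a b : G} (ha : a ^ 2 = 1) (hab : a ≠ b) : a * b ≠ 1 :=
  fun h => hab <| calc
    a = a * (a * b) := by rw [h, mul_one]
    _ = b := by rw [← mul_assoc, ← pow_two, ha, one_mul]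

end Exponent2

namespace MonoidAlgebra

variable {R G : Type*} [CommRing R] [CommGroup G]

lemma mapDomainRingHom_mk'_of_sub_one_eq_zero_iff [Nontrivial R] (H : Subgroup G) (g : G) :
    mapDomainRingHom R (QuotientGroup.mk' H) (of R G g - 1) = 0 ↔ g ∈ H := by
  rw [map_sub, map_one, sub_eq_zero, ← QuotientGroup.eq_one_iff,
    ← (of_injective (R := R) (M := G ⧸ H)).eq_iff, map_one]
  simp

lemma mem_of_of_sub_one_dvd [Nontrivial R] {H : Subgroup G} {a n : G} (ha : a ∈ H)
    (h : of R G a - 1 ∣ of R G n - 1) : n ∈ H := by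
  have h' := map_dvd (mapDomainRingHom R (QuotientGroup.mk' H)) h
  rwa [(mapDomainRingHom_mk'_of_sub_one_eq_zero_iff H a).mpr ha, zero_dvd_iff,
    mapDomainRingHom_mk'_of_sub_one_eq_zero_iff] at h'

lemma not_isUnit_of_sub_one [Nontrivial R] (a : G) : ¬IsUnit (of R G a - 1) := fun h =>
  not_isUnit_zero <| (mapDomainRingHom_mk'_of_sub_one_eq_zero_iff (R := R) ⊤ a).mpr
    (Subgroup.mem_top a) ▸ h.map (mapDomainRingHom R (QuotientGroup.mk' ⊤))

lemma one_add_of_add_of_add_of_mul [CharP R 2] (a b : G) :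
    1 + of R G a + of R G b + of R G (a * b) = (of R G a - 1) * (of R G b - 1) := by
  have h2 : (2 : MonoidAlgebra R G) = 0 := by
    have h := map_natCast (algebraMap R (MonoidAlgebra R G)) 2
    rw [CharP.cast_eq_zero, map_zero] at h
    exact_mod_cast h.symm
  rw [map_mul]
  linear_combination (of R G a + of R G b) * h2

lemma one_add_of_add_of_add_of_mul_ne_zero [Nontrivial R] {a b : G} (ha : a ≠ 1) (hb : b ≠ 1)
    (hab : a * b ≠ 1) : 1 + of R G a + of R G b + of R G (a * b) ≠ 0 := fun h => by
  simpa [of_apply, Finsupp.single_apply, ha.symm, hb.symm, hab.symm]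
    using congrArg (fun x => x.coeff 1) h

end MonoidAlgebra

open MonoidAlgebra

section Phi

variable {R G : Type*} [CommRing R] [CommGroup G]

lemma of_sub_one_mem_Phi {N : Subgroup G} {n : G} (hn : n ∈ N) : of R G n - 1 ∈ Phi R N :=
  Ideal.subset_span ⟨n, hn, rfl⟩

lemma Phi_bot : Phi R (⊥ : Subgroup G) = ⊥ := by
  refine Ideal.span_eq_bot.mpr ?_
  rintro _ ⟨n, hn, rfl⟩
  beta_reduce
  rw [Subgroup.mem_bot.mp hn, map_one, sub_self]

variable [Nontrivial R] [CharP R 2]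

lemma span_one_add_of_add_of_add_of_mul_ne_top (a b : G) :
    Ideal.span {1 + of R G a + of R G b + of R G (a * b)} ≠ ⊤ := by
  rw [Ne, Ideal.span_singleton_eq_top, one_add_of_add_of_add_of_mul]
  exact fun h => not_isUnit_of_sub_one a (isUnit_of_mul_isUnit_left h)

lemma span_one_add_of_add_of_add_of_mul_ne_Phi {a b : G} (ha : a ^ 2 = 1) (hb : b ^ 2 = 1)
    (ha1 : a ≠ 1) (hb1 : b ≠ 1) (hab : a ≠ b) (N : Subgroup G) :
    Ideal.span {1 + of R G a + of R G b + of R G (a * b)} ≠ Phi R N := by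
  intro h
  have hN : N = ⊥ := by
    refine eq_bot_iff.mpr fun n hn => Subgroup.mem_bot.mpr ?_
    have hdvd := Ideal.mem_span_singleton.mp (h ▸ of_sub_one_mem_Phi (R := R) hn)
    rw [one_add_of_add_of_add_of_mul] at hdvd
    have hna := mem_of_of_sub_one_dvd (Subgroup.mem_zpowers a) (dvd_of_mul_right_dvd hdvd)
    have hnb := mem_of_of_sub_one_dvd (Subgroup.mem_zpowers b) (dvd_of_mul_left_dvd hdvd)
    rcases eq_one_or_eq_of_mem_zpowers ha hna with hn1 | rfl
    · exact hn1
    · exact (eq_one_or_eq_of_mem_zpowers hb hnb).resolve_right hab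
  rw [hN, Phi_bot, Ideal.span_singleton_eq_bot] at h
  exact one_add_of_add_of_add_of_mul_ne_zero ha1 hb1 (mul_ne_one_of_pow_two_eq_one ha hab) h

end Phi

theorem stmt11 (R G : Type*) [Field R] [CommGroup G] [CharP R 2]
    (hG : IsPGroup 2 G) (h4 : ∀ g : G, orderOf g ≠ 4)
    (hcard : 2 < Cardinal.mk G) :
    ∃ f₁ f₂ : G, f₁ ≠ 1 ∧ f₂ ≠ 1 ∧
      f₁ * f₂ ≠ 1 ∧ f₁ * f₂ ≠ f₁ ∧ f₁ * f₂ ≠ f₂ ∧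
      Ideal.span {(1 + MonoidAlgebra.of R G f₁ + MonoidAlgebra.of R G f₂ +
          MonoidAlgebra.of R G (f₁ * f₂) : MonoidAlgebra R G)} ≠ ⊤ ∧
      ∀ N : Subgroup G,
        Ideal.span {(1 + MonoidAlgebra.of R G f₁ + MonoidAlgebra.of R G f₂ +
          MonoidAlgebra.of R G (f₁ * f₂) : MonoidAlgebra R G)} ≠ Phi R N := by
  have hsq := hG.pow_two_eq_one h4
  obtain ⟨f₁, hf₁, -⟩ := Cardinal.exists_ne_ne_of_two_lt_mk hcard 1 1
  obtain ⟨f₂, hf₂, hf₂₁⟩ := Cardinal.exists_ne_ne_of_two_lt_mk hcard 1 f₁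
  exact ⟨f₁, f₂, hf₁, hf₂, mul_ne_one_of_pow_two_eq_one (hsq f₁) (Ne.symm hf₂₁),
    fun h => hf₂ (mul_eq_left.mp h), fun h => hf₁ (mul_eq_right.mp h),
    span_one_add_of_add_of_add_of_mul_ne_top f₁ f₂,
    span_one_add_of_add_of_add_of_mul_ne_Phi (hsq f₁) (hsq f₂) hf₁ hf₂ (Ne.symm hf₂₁)⟩
end
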